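/- arXiv:math/0301226 — 2 statements merged into one kernel-verified Lean document; each statement's English description precedes it below -/
import Mathlib

section
/- Let α₀ > 0 and let l : [0, α₀] → ℝ be a positive differentiable function satisfying l'(α) = (l(α)/α)·(1 + E(α)) for α ∈ (0, α₀], where |E(α)| ≤ 1/sinh²(R) for a fixed R > 0. Then for all 0 < α ≤ β ≤ α₀, the ratio satisfies (α/β)^(1+1/sinh²R) ≤ l(α)/l(β) ≤ (α/β)^(1−1/sinh²R). -/
/-!
Write `l' = (l / α) k` with `k = 1 + E`. Then `log l - c log α` has derivative `(k - c) / α`,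
so it is monotone when `c ≤ k` and antitone when `k ≤ c`. Taking `c = 1 ∓ 1/sinh² R` and
exponentiating the resulting comparisons between `α` and `β` gives the two bounds on `l α / l β`.
-/

open Real Set

section LogDerivBound

variable {l k : ℝ → ℝ} {c α β : ℝ}

lemma hasDerivAt_log_sub_mul_log {x : ℝ} (hx : 0 < x) (hlx : 0 < l x)
    (h : HasDerivAt l (l x / x * k x) x) :
    HasDerivAt (fun y => log (l y) - c * log y) ((k x - c) / x) x := by
  refine ((h.log hlx.ne').sub ((hasDerivAt_log hx.ne').const_mul c)).congr_deriv ?_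
  field_simp

lemma monotoneOn_log_sub_mul_log (hα : 0 < α) (hl : ∀ x ∈ Icc α β, 0 < l x)
    (hderiv : ∀ x ∈ Icc α β, HasDerivAt l (l x / x * k x) x)
    (hc : ∀ x ∈ Icc α β, c ≤ k x) :
    MonotoneOn (fun y => log (l y) - c * log y) (Icc α β) := by
  have hf : ∀ x ∈ Icc α β,
      HasDerivAt (fun y => log (l y) - c * log y) ((k x - c) / x) x := fun x hx =>
    hasDerivAt_log_sub_mul_log (hα.trans_le hx.1) (hl x hx) (hderiv x hx)
  refine monotoneOn_of_hasDerivWithinAt_nonneg (convex_Icc α β)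
    (fun x hx => (hf x hx).continuousAt.continuousWithinAt)
    (fun x hx => (hf x (interior_subset hx)).hasDerivWithinAt) fun x hx => ?_
  have hx' := interior_subset hx
  exact div_nonneg (sub_nonneg.2 (hc x hx')) (hα.trans_le hx'.1).le

lemma antitoneOn_log_sub_mul_log (hα : 0 < α) (hl : ∀ x ∈ Icc α β, 0 < l x)
    (hderiv : ∀ x ∈ Icc α β, HasDerivAt l (l x / x * k x) x)
    (hc : ∀ x ∈ Icc α β, k x ≤ c) :
    AntitoneOn (fun y => log (l y) - c * log y) (Icc α β) := by
  have hf : ∀ x ∈ Icc α β,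
      HasDerivAt (fun y => log (l y) - c * log y) ((k x - c) / x) x := fun x hx =>
    hasDerivAt_log_sub_mul_log (hα.trans_le hx.1) (hl x hx) (hderiv x hx)
  refine antitoneOn_of_hasDerivWithinAt_nonpos (convex_Icc α β)
    (fun x hx => (hf x hx).continuousAt.continuousWithinAt)
    (fun x hx => (hf x (interior_subset hx)).hasDerivWithinAt) fun x hx => ?_
  have hx' := interior_subset hx
  exact div_nonpos_of_nonpos_of_nonneg (sub_nonpos.2 (hc x hx')) (hα.trans_le hx'.1).le

end LogDerivBound

section RatioBound

variable {p q a b c : ℝ}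

lemma log_div_rpow (ha : 0 < a) (hb : 0 < b) :
    log ((a / b) ^ c) = c * log a - c * log b := by
  rw [log_rpow (div_pos ha hb), log_div ha.ne' hb.ne', mul_sub]

lemma div_le_rpow_of_log_sub_mul_log_le (hp : 0 < p) (hq : 0 < q) (ha : 0 < a) (hb : 0 < b)
    (h : log p - c * log a ≤ log q - c * log b) :
    p / q ≤ (a / b) ^ c := by
  rw [← log_le_log_iff (div_pos hp hq) (rpow_pos_of_pos (div_pos ha hb) c),
    log_div_rpow ha hb, log_div hp.ne' hq.ne']
  linarith

lemma rpow_le_div_of_log_sub_mul_log_le (hp : 0 < p) (hq : 0 < q) (ha : 0 < a) (hb : 0 < b)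
    (h : log q - c * log b ≤ log p - c * log a) :
    (a / b) ^ c ≤ p / q := by
  rw [← log_le_log_iff (rpow_pos_of_pos (div_pos ha hb) c) (div_pos hp hq),
    log_div_rpow ha hb, log_div hp.ne' hq.ne']
  linarith

end RatioBound

theorem rpow_le_div_le_rpow_of_hasDerivAt {l k : ℝ → ℝ} {a b α β : ℝ} (hα : 0 < α)
    (hαβ : α ≤ β) (hl : ∀ x ∈ Icc α β, 0 < l x)
    (hderiv : ∀ x ∈ Icc α β, HasDerivAt l (l x / x * k x) x)
    (hk : ∀ x ∈ Icc α β, a ≤ k x ∧ k x ≤ b) :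
    (α / β) ^ b ≤ l α / l β ∧ l α / l β ≤ (α / β) ^ a := by
  have hαmem : α ∈ Icc α β := left_mem_Icc.2 hαβ
  have hβmem : β ∈ Icc α β := right_mem_Icc.2 hαβ
  have hβ : 0 < β := hα.trans_le hαβ
  exact ⟨rpow_le_div_of_log_sub_mul_log_le (hl α hαmem) (hl β hβmem) hα hβ
      (antitoneOn_log_sub_mul_log hα hl hderiv (fun x hx => (hk x hx).2) hαmem hβmem hαβ),
    div_le_rpow_of_log_sub_mul_log_le (hl α hαmem) (hl β hβmem) hα hβ
      (monotoneOn_log_sub_mul_log hα hl hderiv (fun x hx => (hk x hx).1) hαmem hβmem hαβ)⟩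

theorem stmt_0_general (α₀ R : ℝ)
    (l E : ℝ → ℝ)
    (hl : ∀ α ∈ Set.Icc (0:ℝ) α₀, 0 < l α)
    (hderiv : ∀ α ∈ Set.Ioc (0:ℝ) α₀, HasDerivAt l (l α / α * (1 + E α)) α)
    (hE : ∀ α ∈ Set.Ioc (0:ℝ) α₀, |E α| ≤ 1 / Real.sinh R ^ 2) :
    ∀ α β : ℝ, 0 < α → α ≤ β → β ≤ α₀ →
      (α / β) ^ (1 + 1 / Real.sinh R ^ 2 : ℝ) ≤ l α / l β ∧
      l α / l β ≤ (α / β) ^ (1 - 1 / Real.sinh R ^ 2 : ℝ) := by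
  intro α β hα hαβ hβ
  have hsub : Icc α β ⊆ Ioc 0 α₀ := fun x hx => ⟨hα.trans_le hx.1, hx.2.trans hβ⟩
  refine rpow_le_div_le_rpow_of_hasDerivAt hα hαβ
    (fun x hx => hl x (Ioc_subset_Icc_self (hsub hx))) (fun x hx => hderiv x (hsub hx)) fun x hx => ?_
  have := abs_le.1 (hE x (hsub hx))
  constructor <;> linarith

/-- Gronwall-type consequence of the Hodgson–Kerckhoff derivative estimate
`l'(α) = (l(α)/α)(1 + E(α))` with `|E| ≤ 1/sinh² R`. -/
theorem stmt_0 (α₀ R : ℝ) (hα₀ : 0 < α₀) (hR : 0 < R)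
    (l E : ℝ → ℝ)
    (hl : ∀ α ∈ Set.Icc (0:ℝ) α₀, 0 < l α)
    (hderiv : ∀ α ∈ Set.Ioc (0:ℝ) α₀, HasDerivAt l (l α / α * (1 + E α)) α)
    (hE : ∀ α ∈ Set.Ioc (0:ℝ) α₀, |E α| ≤ 1 / Real.sinh R ^ 2) :
    ∀ α β : ℝ, 0 < α → α ≤ β → β ≤ α₀ →
      (α / β) ^ (1 + 1 / Real.sinh R ^ 2 : ℝ) ≤ l α / l β ∧
      l α / l β ≤ (α / β) ^ (1 - 1 / Real.sinh R ^ 2 : ℝ) :=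
  stmt_0_general α₀ R l E hl hderiv hE
end

section
/- Suppose l : (0, 2π] → ℝ is positive and differentiable with (l(α)/α)·(1−c) ≤ l'(α) ≤ (l(α)/α)·(1+c) for a constant 0 ≤ c < 1. Then l extends continuously to α = 0 with l(0) = 0, and moreover l(α) ≤ l(2π)·(α/2π)^{1−c} for all α ∈ (0, 2π]. -/
open Real in
/-- If `(l/α)(1-c) ≤ l' ≤ (l/α)(1+c)` with `0 ≤ c < 1`, then `l(α) → 0` as
`α → 0⁺` and `l(α) ≤ l(2π)·(α/2π)^{1-c}`. -/
theorem stmt_17 (c : ℝ) (hc0 : 0 ≤ c) (hc1 : c < 1) (l : ℝ → ℝ)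
    (hl : ∀ α ∈ Set.Ioc (0:ℝ) (2 * π), 0 < l α)
    (hdiff : ∀ α ∈ Set.Ioc (0:ℝ) (2 * π), DifferentiableAt ℝ l α)
    (hlo : ∀ α ∈ Set.Ioc (0:ℝ) (2 * π), l α / α * (1 - c) ≤ deriv l α)
    (hhi : ∀ α ∈ Set.Ioc (0:ℝ) (2 * π), deriv l α ≤ l α / α * (1 + c)) :
    Filter.Tendsto l (nhdsWithin 0 (Set.Ioi 0)) (nhds 0) ∧
    ∀ α ∈ Set.Ioc (0:ℝ) (2 * π),
      l α ≤ l (2 * π) * (α / (2 * π)) ^ (1 - c : ℝ) := by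
  have hπ : (0:ℝ) < 2 * π := by positivity
  have hp1 : (0:ℝ) < 1 - c := by linarith
  set p : ℝ := -(1 - c) with hp
  set g : ℝ → ℝ := fun x => l x * x ^ p with hg
  have hgd : ∀ x ∈ Set.Ioc (0:ℝ) (2 * π),
      HasDerivAt g (deriv l x * x ^ p + l x * (p * x ^ (p - 1))) x := by
    intro x hx
    exact ((hdiff x hx).hasDerivAt).mul
      (Real.hasDerivAt_rpow_const (Or.inl (ne_of_gt hx.1)))
  have hgd0 : ∀ x ∈ Set.Ioc (0:ℝ) (2 * π),
      0 ≤ deriv l x * x ^ p + l x * (p * x ^ (p - 1)) := by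
    intro x hx
    have hx0 : (0:ℝ) < x := hx.1
    have hxp : x ^ p = x ^ (p - 1) * x := by
      rw [← Real.rpow_add_one (ne_of_gt hx0) (p - 1)]
      ring_nf
    have hpow : (0:ℝ) < x ^ (p - 1) := Real.rpow_pos_of_pos hx0 _
    have hder : l x / x * (1 - c) ≤ deriv l x := hlo x hx
    have hlx : (1 - c) * l x ≤ deriv l x * x := by
      have := mul_le_mul_of_nonneg_right hder (le_of_lt hx0)
      calc (1 - c) * l x = l x / x * (1 - c) * x := by field_simp
        _ ≤ deriv l x * x := this
    have : deriv l x * x ^ p + l x * (p * x ^ (p - 1))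
        = x ^ (p - 1) * (deriv l x * x - (1 - c) * l x) := by
      rw [hxp, hp]; ring
    rw [this]
    exact mul_nonneg hpow.le (by linarith)
  -- monotonicity of g
  have key : ∀ a ∈ Set.Ioc (0:ℝ) (2 * π), g a ≤ g (2 * π) := by
    intro a ha
    have hmono : MonotoneOn g (Set.Icc a (2 * π)) := by
      apply monotoneOn_of_deriv_nonneg (convex_Icc a (2 * π))
      · intro x hx
        have hx' : x ∈ Set.Ioc (0:ℝ) (2 * π) := ⟨lt_of_lt_of_le ha.1 hx.1, hx.2⟩
        exact (hgd x hx').continuousAt.continuousWithinAt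
      · intro x hx
        rw [interior_Icc] at hx
        have hx' : x ∈ Set.Ioc (0:ℝ) (2 * π) := ⟨lt_trans ha.1 hx.1, hx.2.le⟩
        exact ((hgd x hx').differentiableAt).differentiableWithinAt
      · intro x hx
        rw [interior_Icc] at hx
        have hx' : x ∈ Set.Ioc (0:ℝ) (2 * π) := ⟨lt_trans ha.1 hx.1, hx.2.le⟩
        rw [(hgd x hx').deriv]
        exact hgd0 x hx'
    exact hmono ⟨le_refl a, ha.2⟩ ⟨ha.2, le_refl _⟩ ha.2
  -- the main bound
  have bound : ∀ α ∈ Set.Ioc (0:ℝ) (2 * π),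
      l α ≤ l (2 * π) * (α / (2 * π)) ^ (1 - c : ℝ) := by
    intro α hα
    have hα0 : (0:ℝ) < α := hα.1
    have h1 : l α * α ^ p ≤ l (2 * π) * (2 * π) ^ p := key α hα
    have h2 : l α * α ^ p * α ^ (1 - c : ℝ) ≤ l (2 * π) * (2 * π) ^ p * α ^ (1 - c : ℝ) :=
      mul_le_mul_of_nonneg_right h1 (Real.rpow_nonneg hα0.le _)
    have hcancel : α ^ p * α ^ (1 - c : ℝ) = 1 := by
      rw [← Real.rpow_add hα0]
      simp [hp]
    have hLHS : l α * α ^ p * α ^ (1 - c : ℝ) = l α := by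
      rw [mul_assoc, hcancel, mul_one]
    have hRHS : l (2 * π) * (2 * π) ^ p * α ^ (1 - c : ℝ)
        = l (2 * π) * (α / (2 * π)) ^ (1 - c : ℝ) := by
      rw [Real.div_rpow hα0.le hπ.le, hp, Real.rpow_neg hπ.le]
      field_simp
    rw [hLHS, hRHS] at h2
    exact h2
  refine ⟨?_, bound⟩
  -- tendsto
  have hC : Filter.Tendsto (fun α : ℝ => l (2 * π) * (α / (2 * π)) ^ (1 - c : ℝ))
      (nhdsWithin 0 (Set.Ioi 0)) (nhds 0) := by
    have hcont : ContinuousAt (fun α : ℝ => l (2 * π) * (α / (2 * π)) ^ (1 - c : ℝ)) 0 := by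
      apply ContinuousAt.mul continuousAt_const
      exact (Real.continuousAt_rpow_const _ _ (Or.inr hp1.le)).comp
        (continuousAt_id.div continuousAt_const hπ.ne')
    have h0 : l (2 * π) * ((0:ℝ) / (2 * π)) ^ (1 - c : ℝ) = 0 := by
      rw [zero_div, Real.zero_rpow hp1.ne', mul_zero]
    have := hcont.tendsto.mono_left (nhdsWithin_le_nhds (s := Set.Ioi (0:ℝ)))
    rwa [h0] at this
  apply squeeze_zero' ?_ ?_ hC
  · filter_upwards [Ioc_mem_nhdsGT_of_mem ⟨le_refl (0:ℝ), hπ⟩] with α hα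
    exact (hl α hα).le
  · filter_upwards [Ioc_mem_nhdsGT_of_mem ⟨le_refl (0:ℝ), hπ⟩] with α hα
    exact bound α hα
end
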